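/- Let f : H → G be a core-free virtual endomorphism of a group G. Let Ġ = G^{(ℕ)} ⋊ C₂ where the generator σ of C₂ acts by swapping coordinates 2n and 2n+1 for all n. Let Ḣ = H × G^{(ℕ∖{0})} ≤ G^{(ℕ)} ≤ Ġ and define ḟ : Ḣ → Ġ by ḟ(a₀, a₁, a₂, a₃, a₄, …) = (f(a₀), a₂, a₁, a₄, a₃, …). Then ḟ is a core-free virtual endomorphism of Ġ of index 2·[G:H]. -/

import Mathlib

/-- The restricted direct product `G^{(ℕ)}`: finitely supported functions `ℕ → G`. -/
def restrictedProd (G : Type*) [Group G] : Subgroup (ℕ → G) where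
  carrier := {g | Set.Finite {n | g n ≠ 1}}
  one_mem' := by simp
  mul_mem' := by
    intro a b ha hb
    exact Set.Finite.subset (ha.union hb) (by
      intro n hn
      by_contra h
      simp only [Set.mem_union, Set.mem_setOf_eq, not_or, not_not] at h
      simp [Set.mem_setOf_eq, Pi.mul_apply, h.1, h.2] at hn)
  inv_mem' := by
    intro a ha
    exact ha.subset (by intro n hn; simpa using hn)

/-- The involution of `ℕ` swapping `2n ↔ 2n+1`. -/
def swapIdx (n : ℕ) : ℕ := if n % 2 = 0 then n + 1 else n - 1

lemma swapIdx_involutive : Function.Involutive swapIdx := by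
  intro n
  rcases Nat.mod_two_eq_zero_or_one n with h | h
  · have h1 : swapIdx n = n + 1 := if_pos h
    have h2 : swapIdx (n + 1) = n + 1 - 1 := if_neg (by omega)
    rw [h1, h2]; omega
  · have h1 : swapIdx n = n - 1 := if_neg (by omega)
    have h2 : swapIdx (n - 1) = n - 1 + 1 := if_pos (by omega)
    rw [h1, h2]; omega

lemma mem_restrictedProd_comp {G : Type*} [Group G] (g : ↥(restrictedProd G))
    (e : ℕ → ℕ) (he : Function.Involutive e) :
    (fun n => (g : ℕ → G) (e n)) ∈ restrictedProd G := by
  have : {n | (g : ℕ → G) (e n) ≠ 1} ⊆ e ⁻¹' {n | (g : ℕ → G) n ≠ 1} := fun n hn => hn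
  exact Set.Finite.subset (Set.Finite.preimage (Set.injOn_of_injective he.injective) g.2) this

/-- The swap automorphism of `G^{(ℕ)}` exchanging coordinates `2n ↔ 2n+1`. -/
def swapAut (G : Type*) [Group G] : MulAut ↥(restrictedProd G) where
  toFun g := ⟨fun n => (g : ℕ → G) (swapIdx n), mem_restrictedProd_comp g _ swapIdx_involutive⟩
  invFun g := ⟨fun n => (g : ℕ → G) (swapIdx n), mem_restrictedProd_comp g _ swapIdx_involutive⟩
  left_inv g := Subtype.ext (funext fun n => congrArg (g : ℕ → G) (swapIdx_involutive n))
  right_inv g := Subtype.ext (funext fun n => congrArg (g : ℕ → G) (swapIdx_involutive n))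
  map_mul' a b := rfl

lemma swapAut_sq (G : Type*) [Group G] : swapAut G * swapAut G = 1 := by
  ext g n
  exact congrArg (g : ℕ → G) (swapIdx_involutive n)

/-- The action of `C₂ = Multiplicative (ZMod 2)` on `G^{(ℕ)}` by the swap. -/
def c2Action (G : Type*) [Group G] :
    Multiplicative (ZMod 2) →* MulAut ↥(restrictedProd G) :=
  MonoidHom.mk'
    (fun x => if x.toAdd = 0 then 1 else swapAut G)
    (by
      intro a b
      have key := swapAut_sq G
      have h2 : ∀ z : ZMod 2, z = 0 ∨ z = 1 := by decide
      rcases h2 a.toAdd with ha | ha <;> rcases h2 b.toAdd with hb | hb <;>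
        simp_all [toAdd_mul, show (1 : ZMod 2) + 1 = 0 from by decide, key]
      )

variable {G : Type*} [Group G]

/-- The group `Ġ = G^{(ℕ)} ⋊ C₂`. -/
abbrev GDot (G : Type*) [Group G] :=
  SemidirectProduct ↥(restrictedProd G) (Multiplicative (ZMod 2)) (c2Action G)

/-- The subgroup `Ḣ = H × G^{(ℕ∖{0})}` of `Ġ`. -/
def HDot (H : Subgroup G) : Subgroup (GDot G) where
  carrier := {x | x.right = 1 ∧ (x.left : ℕ → G) 0 ∈ H}
  one_mem' := ⟨rfl, H.one_mem⟩
  mul_mem' := by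
    rintro a b ⟨ha1, ha2⟩ ⟨hb1, hb2⟩
    refine ⟨by simp [SemidirectProduct.mul_right, ha1, hb1], ?_⟩
    have h : (a * b).left = a.left * b.left := by
      rw [SemidirectProduct.mul_left, ha1, map_one]; rfl
    rw [h]
    exact H.mul_mem ha2 hb2
  inv_mem' := by
    rintro a ⟨ha1, ha2⟩
    refine ⟨by simp [SemidirectProduct.inv_right, ha1], ?_⟩
    have h : (a⁻¹).left = a.left⁻¹ := by
      rw [SemidirectProduct.inv_left, ha1, inv_one, map_one]; rfl
    rw [h]
    exact H.inv_mem ha2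

/-- The index recoding `0 ↦ 0`, `odd n ↦ n+1`, `even n ≥ 2 ↦ n−1`, so that
`ḟ(a₀,a₁,a₂,a₃,…) = (f(a₀),a₂,a₁,a₄,a₃,…)`. -/
def recodeIdx (n : ℕ) : ℕ := if n = 0 then 0 else if n % 2 = 1 then n + 1 else n - 1

lemma recodeIdx_involutive : Function.Involutive recodeIdx := by
  intro n
  by_cases h0 : n = 0
  · simp [recodeIdx, h0]
  rcases Nat.mod_two_eq_zero_or_one n with h | h
  · have h1 : recodeIdx n = n - 1 := by
      unfold recodeIdx; rw [if_neg h0, if_neg (by omega)]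
    have h2 : recodeIdx (n - 1) = n - 1 + 1 := by
      unfold recodeIdx; rw [if_neg (by omega), if_pos (by omega)]
    rw [h1, h2]; omega
  · have h1 : recodeIdx n = n + 1 := by
      unfold recodeIdx; rw [if_neg h0, if_pos h]
    have h2 : recodeIdx (n + 1) = n + 1 - 1 := by
      unfold recodeIdx; rw [if_neg (by omega), if_neg (by omega)]
    rw [h1, h2]; omega

lemma left_mul_of_right_one (a b : GDot G) (ha : a.right = 1) :
    (a * b).left = a.left * b.left := by
  rw [SemidirectProduct.mul_left, ha, map_one]; rfl

/-- The virtual endomorphism `ḟ : Ḣ → Ġ`,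
`ḟ(a₀,a₁,a₂,a₃,…) = (f(a₀),a₂,a₁,a₄,a₃,…)`. -/
def fDot (H : Subgroup G) (f : ↥H →* G) : ↥(HDot H) →* GDot G :=
  MonoidHom.mk'
    (fun x => SemidirectProduct.inl
      ⟨fun n => if n = 0 then f ⟨((x : GDot G).left : ℕ → G) 0, x.2.2⟩
        else ((x : GDot G).left : ℕ → G) (recodeIdx n),
       by
        refine Set.Finite.subset (Set.Finite.union (Set.finite_singleton 0)
          (Set.Finite.preimage (Set.injOn_of_injective recodeIdx_involutive.injective)
            (x : GDot G).left.2)) ?_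
        intro n hn
        by_cases h : n = 0
        · exact Or.inl h
        · refine Or.inr ?_
          simpa [h] using hn⟩)
    (by
      intro a b
      rw [← map_mul]
      apply congrArg SemidirectProduct.inl
      apply Subtype.ext
      funext n
      have hl : ((a * b : ↥(HDot H)) : GDot G).left =
          (a : GDot G).left * (b : GDot G).left :=
        left_mul_of_right_one _ _ a.2.1
      by_cases h : n = 0
      · simp only [h, if_pos rfl]
        show f _ = f _ * f _
        rw [← map_mul]
        congr 1
        apply Subtype.ext
        show ((a * b : ↥(HDot H)) : GDot G).left.1 0 = _
        rw [hl]; rfl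
      · simp only [if_neg h]
        show ((a * b : ↥(HDot H)) : GDot G).left.1 (recodeIdx n) = _
        rw [hl]
        simp only [Subgroup.coe_mul, Pi.mul_apply, if_neg h])

/-- `f : H → G` is a core-free virtual endomorphism. -/
def CoreFree {G : Type*} [Group G] (H : Subgroup G) (f : ↥H →* G) : Prop :=
  ∀ K : Subgroup G, K ≤ H → K.Normal → (∀ x : ↥H, (x : G) ∈ K → f x ∈ K) → K = ⊥


/-!
`Ḣ` has index `[G:H]` in `G^{(ℕ)}`, which has index `2` in `Ġ`.

Let `K ≤ Ḣ` be normal in `Ġ` and `ḟ`-invariant; it lies in `G^{(ℕ)}`. Its zeroth coordinates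
form a subgroup `K₀ ≤ H`, normal in `G` and `f`-invariant, hence trivial. Conjugation by `σ`
and `ḟ` move every coordinate of `K` step by step to coordinate `0`, so `K` is trivial.
-/

namespace restrictedProd

variable (G) in
def eval (i : ℕ) : ↥(restrictedProd G) →* G :=
  (Pi.evalMonoidHom (fun _ : ℕ => G) i).comp (restrictedProd G).subtype

lemma mulSingle_mem (i : ℕ) (g : G) : Pi.mulSingle i g ∈ restrictedProd G :=
  (Set.finite_singleton i).subset fun n hn => by
    by_contra h
    exact hn (Pi.mulSingle_eq_of_ne (M := fun _ : ℕ => G) h g)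

variable (G) in
def mulSingle (i : ℕ) : G →* ↥(restrictedProd G) :=
  (MonoidHom.mulSingle (fun _ : ℕ => G) i).codRestrict _ (mulSingle_mem i)

lemma eval_mulSingle (i : ℕ) (g : G) : eval G i (mulSingle G i g) = g :=
  Pi.mulSingle_eq_same (M := fun _ : ℕ => G) i g

lemma eval_surjective (i : ℕ) : Function.Surjective (eval G i) :=
  fun g => ⟨mulSingle G i g, eval_mulSingle i g⟩

lemma eq_one_of_forall_eval_eq_one {a : ↥(restrictedProd G)} (h : ∀ i, eval G i a = 1) :
    a = 1 :=
  Subtype.ext (funext h)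

end restrictedProd

namespace SemidirectProduct

variable {N C : Type*} [Group N] [Group C] {φ : C →* MulAut N}

lemma index_ker_rightHom : (rightHom : N ⋊[φ] C →* C).ker.index = Nat.card C := by
  rw [Subgroup.index_ker, MonoidHom.range_eq_top.2 rightHom_surjective, Subgroup.card_top]

lemma relIndex_ker_rightHom (L : Subgroup (N ⋊[φ] C)) :
    L.relIndex rightHom.ker = (L.comap inl).index := by
  rw [Subgroup.index_comap, range_inl_eq_ker_rightHom]

lemma eq_inl_left_of_right_eq_one {x : N ⋊[φ] C} (h : x.right = 1) : x = inl x.left := by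
  rw [← inl_left_mul_inr_right x, h, map_one, mul_one, left_inl]

end SemidirectProduct

open SemidirectProduct restrictedProd

lemma c2Action_ofAdd_one : c2Action G (Multiplicative.ofAdd 1) = swapAut G := by
  change (if (Multiplicative.ofAdd (1 : ZMod 2)).toAdd = 0 then 1 else swapAut G) = _
  exact if_neg (by decide)

lemma inl_mem_HDot_iff {H : Subgroup G} {a : ↥(restrictedProd G)} :
    (inl a : GDot G) ∈ HDot H ↔ eval G 0 a ∈ H :=
  and_iff_right rfl

lemma HDot_le_ker_rightHom (H : Subgroup G) : HDot H ≤ (rightHom : GDot G →* _).ker :=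
  fun _ hx => hx.1

lemma comap_inl_HDot (H : Subgroup G) : (HDot H).comap inl = H.comap (eval G 0) :=
  Subgroup.ext fun _ => inl_mem_HDot_iff

lemma index_HDot (H : Subgroup G) : (HDot H).index = 2 * H.index := by
  rw [← Subgroup.relIndex_mul_index (HDot_le_ker_rightHom H), relIndex_ker_rightHom,
    comap_inl_HDot, Subgroup.index_comap_of_surjective _ (eval_surjective 0),
    index_ker_rightHom, Nat.card_eq_fintype_card, mul_comm]
  rfl

lemma eval_fDot_left_zero {H : Subgroup G} (f : ↥H →* G) (x : ↥(HDot H)) :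
    eval G 0 (fDot H f x).left = f ⟨eval G 0 (x : GDot G).left, x.2.2⟩ :=
  rfl

lemma eval_fDot_left_of_ne_zero {H : Subgroup G} (f : ↥H →* G) (x : ↥(HDot H)) {n : ℕ}
    (hn : n ≠ 0) : eval G n (fDot H f x).left = eval G (recodeIdx n) (x : GDot G).left :=
  if_neg hn

def coordZero (K : Subgroup (GDot G)) : Subgroup G :=
  (K.comap inl).map (eval G 0)

section CoreFree

variable {H : Subgroup G} {f : ↥H →* G} {K : Subgroup (GDot G)}

lemma swapAut_mem_comap_inl [K.Normal] {a : ↥(restrictedProd G)} (ha : a ∈ K.comap inl) :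
    swapAut G a ∈ K.comap inl := by
  change inl (swapAut G a) ∈ K
  rw [← c2Action_ofAdd_one, inl_aut, map_inv]
  exact ‹K.Normal›.conj_mem _ ha _

lemma fDot_inl_left_mem_comap_inl (hKH : K ≤ HDot H)
    (hKf : ∀ x : ↥(HDot H), (x : GDot G) ∈ K → fDot H f x ∈ K)
    {a : ↥(restrictedProd G)} (ha : a ∈ K.comap inl) :
    (fDot H f ⟨inl a, hKH ha⟩).left ∈ K.comap inl :=
  hKf ⟨inl a, hKH ha⟩ ha

/-- Coordinate `2m+1` is brought to coordinate `2m` by the swap, and coordinate `2m+2` to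
coordinate `2m+1` by `ḟ`. -/
lemma eval_mem_coordZero [K.Normal] (hKH : K ≤ HDot H)
    (hKf : ∀ x : ↥(HDot H), (x : GDot G) ∈ K → fDot H f x ∈ K) (n : ℕ) :
    ∀ a ∈ K.comap inl, eval G n a ∈ coordZero K := by
  induction n with
  | zero => exact fun a ha => ⟨a, ha, rfl⟩
  | succ n ih =>
    intro a ha
    rcases Nat.mod_two_eq_zero_or_one n with hn | hn
    · have hswap : swapIdx n = n + 1 := if_pos hn
      have := ih _ (swapAut_mem_comap_inl ha)
      change eval G (swapIdx n) a ∈ _ at this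
      rwa [hswap] at this
    · have hrecode : recodeIdx n = n + 1 := by
        rw [recodeIdx, if_neg (by omega), if_pos hn]
      have := ih _ (fDot_inl_left_mem_comap_inl (f := f) hKH hKf ha)
      rwa [eval_fDot_left_of_ne_zero f _ (by omega), hrecode] at this

lemma coordZero_le (hKH : K ≤ HDot H) : coordZero K ≤ H := by
  rintro _ ⟨a, ha, rfl⟩
  exact inl_mem_HDot_iff.1 (hKH ha)

lemma coordZero_normal [K.Normal] : (coordZero K).Normal :=
  Subgroup.Normal.map inferInstance _ (eval_surjective 0)

lemma map_mem_coordZero (hKH : K ≤ HDot H)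
    (hKf : ∀ x : ↥(HDot H), (x : GDot G) ∈ K → fDot H f x ∈ K)
    (x : ↥H) (hx : (x : G) ∈ coordZero K) : f x ∈ coordZero K := by
  obtain ⟨a, ha, hax⟩ := hx
  refine ⟨_, fDot_inl_left_mem_comap_inl hKH hKf ha, ?_⟩
  rw [eval_fDot_left_zero]
  exact congrArg f (Subtype.ext hax)

lemma comap_inl_eq_bot (hf : CoreFree H f) [K.Normal] (hKH : K ≤ HDot H)
    (hKf : ∀ x : ↥(HDot H), (x : GDot G) ∈ K → fDot H f x ∈ K) : K.comap inl = ⊥ := by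
  have hbot : coordZero K = ⊥ :=
    hf _ (coordZero_le hKH) coordZero_normal (map_mem_coordZero hKH hKf)
  refine (Subgroup.eq_bot_iff_forall _).2 fun a ha => eq_one_of_forall_eval_eq_one fun n => ?_
  simpa [hbot] using eval_mem_coordZero hKH hKf n a ha

end CoreFree

lemma coreFree_fDot {H : Subgroup G} {f : ↥H →* G} (hf : CoreFree H f) :
    CoreFree (HDot H) (fDot H f) := by
  intro K hKH hKn hKf
  have hP := comap_inl_eq_bot hf hKH hKf
  refine (Subgroup.eq_bot_iff_forall _).2 fun x hx => ?_
  have hx_inl : x = inl x.left := eq_inl_left_of_right_eq_one (hKH hx).1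
  have hleft : x.left ∈ K.comap inl := by rwa [Subgroup.mem_comap, ← hx_inl]
  rw [hP, Subgroup.mem_bot] at hleft
  rw [hx_inl, hleft, map_one]

theorem fDot_coreFree_general (H : Subgroup G) (f : ↥H →* G)
    (hf : CoreFree H f) :
    CoreFree (HDot H) (fDot H f) ∧ (HDot H).index = 2 * H.index :=
  ⟨coreFree_fDot hf, index_HDot H⟩

/-- if `f : H → G` is a core-free virtual endomorphism, then
`ḟ : Ḣ → Ġ = G^{(ℕ)} ⋊ C₂` is a core-free virtual endomorphism of index `2·[G:H]`. -/
theorem fDot_coreFree (H : Subgroup G) [H.FiniteIndex] (f : ↥H →* G)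
    (hf : CoreFree H f) :
    CoreFree (HDot H) (fDot H f) ∧ (HDot H).index = 2 * H.index :=
  fDot_coreFree_general H f hf
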